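/- arXiv:1811.00169 — 12 statements merged into one kernel-verified Lean document; each statement's English description precedes it below -/
import Mathlib

section
/- For any x in a Hilbert space H, the sequence of approximations x_n produced by the dual Kaczmarz algorithm with analysis sequence {φ_n} and synthesis sequence {ψ_n} satisfies x_n = Σ_{k=0}^n ⟨x, g_k⟩ ψ_k for all n ≥ 0, where {g_n} is the auxiliary sequence of the pair. -/
open scoped ComplexInnerProductSpace
open Finset

/-! The coefficient `⟪φ (n+1), x - X n⟫` added at step `n + 1` equals `⟪g (n+1), x⟫`, because
the maps `v ↦ ∑ k ≤ n, ⟪ψ k, v⟫ • g k` and `y ↦ ∑ k ≤ n, ⟪g k, y⟫ • ψ k` are adjoint to each other;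
induction on `n` then gives the formula. -/

theorem inner_sum_inner_smul_comm {𝕜 E ι : Type*} [RCLike 𝕜] [NormedAddCommGroup E]
    [InnerProductSpace 𝕜 E] (s : Finset ι) (a b : ι → E) (v x : E) :
    inner 𝕜 (∑ k ∈ s, inner 𝕜 (a k) v • b k) x
      = inner 𝕜 v (∑ k ∈ s, inner 𝕜 (b k) x • a k) := by
  simp only [sum_inner, inner_sum, inner_smul_left, inner_smul_right, inner_conj_symm, mul_comm]

/-- The paper's `⟨a, b⟩`, linear in the first slot, is Mathlib's `⟪b, a⟫`. -/
theorem dual_kaczmarz_partial_sum_general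
    {H : Type*} [NormedAddCommGroup H] [InnerProductSpace ℂ H]
    (φ ψ g X : ℕ → H) (x : H)
    (hX0 : X 0 = ⟪φ 0, x⟫ • ψ 0)
    (hX : ∀ n, X (n + 1) = X n + ⟪φ (n + 1), x - X n⟫ • ψ (n + 1))
    (hg0 : g 0 = φ 0)
    (hg : ∀ n, g (n + 1)
        = φ (n + 1) - ∑ k ∈ Finset.range (n + 1), ⟪ψ k, φ (n + 1)⟫ • g k) :
    ∀ n, X n = ∑ k ∈ Finset.range (n + 1), ⟪g k, x⟫ • ψ k := by
  intro n
  induction n with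
  | zero => simp [hX0, hg0]
  | succ n ih =>
    have hcoeff : ⟪φ (n + 1), x - X n⟫ = ⟪g (n + 1), x⟫ := by
      rw [hg n, inner_sub_left, inner_sum_inner_smul_comm, ← inner_sub_right, ih]
    rw [hX, hcoeff, ih, ← sum_range_succ _ (n + 1)]

/-- the dual Kaczmarz approximations satisfy
`x_n = ∑_{k=0}^n ⟨x, g_k⟩ ψ_k`. (Paper's `⟨a, b⟩`, linear in the first slot,
is Mathlib's `⟪b, a⟫`.) -/
theorem dual_kaczmarz_partial_sum
    {H : Type*} [NormedAddCommGroup H] [InnerProductSpace ℂ H] [CompleteSpace H]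
    (φ ψ g X : ℕ → H) (x : H)
    (hpair : ∀ n, ⟪ψ n, φ n⟫ = 1)
    (hX0 : X 0 = ⟪φ 0, x⟫ • ψ 0)
    (hX : ∀ n, X (n + 1) = X n + ⟪φ (n + 1), x - X n⟫ • ψ (n + 1))
    (hg0 : g 0 = φ 0)
    (hg : ∀ n, g (n + 1)
        = φ (n + 1) - ∑ k ∈ Finset.range (n + 1), ⟪ψ k, φ (n + 1)⟫ • g k) :
    ∀ n, X n = ∑ k ∈ Finset.range (n + 1), ⟪g k, x⟫ • ψ k :=
  dual_kaczmarz_partial_sum_general φ ψ g X x hX0 hX hg0 hg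
end

section
/- If {(φ_n, ψ_n)} is an effective pair, then every x ∈ H admits the reconstruction x = Σ_{k=0}^∞ ⟨x, g_k⟩ ψ_k, where {g_n} is the auxiliary sequence of the pair. -/
/-!
The auxiliary sequence is built so that the coefficient `⟨x - x_n, φ_{n+1}⟩` of the dual
Kaczmarz step equals `⟨x, g_{n+1}⟩` whenever `x_n = ∑_{k ≤ n} ⟨x, g_k⟩ ψ_k`. By induction the
Kaczmarz approximations are therefore exactly the partial sums of the reconstruction series,
and effectivity says that they converge to `x`.
-/

open scoped ComplexInnerProductSpace
open Filter Topology Finset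

variable {H : Type*} [NormedAddCommGroup H] [InnerProductSpace ℂ H] [CompleteSpace H]

/-- The sequence of approximations produced by the dual Kaczmarz algorithm with
analysis sequence `φ` and synthesis sequence `ψ`, applied to `x`.
(Paper's `⟨a, b⟩`, linear in the first slot, is Mathlib's `⟪b, a⟫`.) -/
noncomputable def kacz (φ ψ : ℕ → H) (x : H) : ℕ → H
  | 0 => ⟪φ 0, x⟫ • ψ 0
  | n + 1 => kacz φ ψ x n + ⟪φ (n + 1), x - kacz φ ψ x n⟫ • ψ (n + 1)

/-- `(φ, ψ)` is an effective pair: the dual Kaczmarz approximations converge to `x`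
for every `x`. -/
def EffectivePair (φ ψ : ℕ → H) : Prop :=
  ∀ x : H, Filter.Tendsto (kacz φ ψ x) Filter.atTop (nhds x)

lemma inner_sub_sum_smul_eq_inner_sub_sum_smul {𝕜 E ι : Type*} [RCLike 𝕜]
    [NormedAddCommGroup E] [InnerProductSpace 𝕜 E] (s : Finset ι) (g ψ : ι → E) (f x : E) :
    inner 𝕜 (f - ∑ k ∈ s, inner 𝕜 (ψ k) f • g k) x
      = inner 𝕜 f (x - ∑ k ∈ s, inner 𝕜 (g k) x • ψ k) := by
  rw [inner_sub_left, inner_sub_right, inner_sum, sum_inner]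
  congr 1
  refine sum_congr rfl fun k _ => ?_
  rw [inner_smul_left, inner_smul_right, inner_conj_symm, mul_comm]

lemma kacz_eq_sum {E : Type*} [NormedAddCommGroup E] [InnerProductSpace ℂ E]
    {φ ψ g : ℕ → E} (hg0 : g 0 = φ 0)
    (hg : ∀ n, g (n + 1) = φ (n + 1) - ∑ k ∈ range (n + 1), ⟪ψ k, φ (n + 1)⟫ • g k)
    (x : E) (n : ℕ) :
    kacz φ ψ x n = ∑ k ∈ range (n + 1), ⟪g k, x⟫ • ψ k := by
  induction n with
  | zero => simp [kacz, hg0]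
  | succ n ih =>
    rw [kacz, ih, ← inner_sub_sum_smul_eq_inner_sub_sum_smul, ← hg, sum_range_succ _ (n + 1)]

theorem effective_pair_reconstruction_general
    (φ ψ g : ℕ → H)
    (hg0 : g 0 = φ 0)
    (hg : ∀ n, g (n + 1)
        = φ (n + 1) - ∑ k ∈ Finset.range (n + 1), ⟪ψ k, φ (n + 1)⟫ • g k)
    (heff : EffectivePair φ ψ) :
    ∀ x : H,
      Filter.Tendsto (fun n => ∑ k ∈ Finset.range (n + 1), ⟪g k, x⟫ • ψ k)
        Filter.atTop (nhds x) :=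
  fun x => (heff x).congr (kacz_eq_sum hg0 hg x)

/-- if `(φ, ψ)` is an effective pair then every `x` is reconstructed as
`x = ∑_{k=0}^∞ ⟨x, g_k⟩ ψ_k`, where `g` is the auxiliary sequence of the pair. -/
theorem effective_pair_reconstruction
    (φ ψ g : ℕ → H)
    (hpair : ∀ n, ⟪ψ n, φ n⟫ = 1)
    (hg0 : g 0 = φ 0)
    (hg : ∀ n, g (n + 1)
        = φ (n + 1) - ∑ k ∈ Finset.range (n + 1), ⟪ψ k, φ (n + 1)⟫ • g k)
    (heff : EffectivePair φ ψ) :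
    ∀ x : H,
      Filter.Tendsto (fun n => ∑ k ∈ Finset.range (n + 1), ⟪g k, x⟫ • ψ k)
        Filter.atTop (nhds x) :=
  effective_pair_reconstruction_general φ ψ g hg0 hg heff
end

section
/- Let T be a bounded invertible operator on a Hilbert space H. Then {(φ_n, ψ_n)} is an effective pair if and only if {(Tφ_n, (T⁻¹)*ψ_n)} is an effective pair. -/
open scoped ComplexInnerProductSpace
open Filter Topology Finset

variable {H : Type*} [NormedAddCommGroup H] [InnerProductSpace ℂ H] [CompleteSpace H]

namespace ContinuousLinearEquiv

variable {𝕜 E F : Type*} [RCLike 𝕜] [NormedAddCommGroup E] [InnerProductSpace 𝕜 E]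
  [CompleteSpace E] [NormedAddCommGroup F] [InnerProductSpace 𝕜 F] [CompleteSpace F]

@[simp]
theorem adjoint_apply_adjoint_symm_apply (e : E ≃L[𝕜] F) (y : E) :
    ContinuousLinearMap.adjoint (e : E →L[𝕜] F)
      (ContinuousLinearMap.adjoint (e.symm : F →L[𝕜] E) y) = y := by
  rw [← ContinuousLinearMap.comp_apply, ← ContinuousLinearMap.adjoint_comp, e.coe_symm_comp_coe,
    ContinuousLinearMap.adjoint_id, ContinuousLinearMap.id_apply]

@[simp]
theorem adjoint_symm_apply_adjoint_apply (e : E ≃L[𝕜] F) (y : F) :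
    ContinuousLinearMap.adjoint (e.symm : F →L[𝕜] E)
      (ContinuousLinearMap.adjoint (e : E →L[𝕜] F) y) = y :=
  e.symm.adjoint_apply_adjoint_symm_apply y

end ContinuousLinearEquiv

section Conjugation

open ContinuousLinearMap

variable {K : Type*} [NormedAddCommGroup K] [InnerProductSpace ℂ K] [CompleteSpace K]

/-- The coefficients agree because `⟪S φ, x - R y⟫ = ⟪φ, S† x - y⟫` when `S† R = 1`. -/
theorem kacz_map (S R : H →L[ℂ] K) (hRS : ∀ y, adjoint S (R y) = y) (φ ψ : ℕ → H) (x : K)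
    (n : ℕ) :
    kacz (fun n => S (φ n)) (fun n => R (ψ n)) x n = R (kacz φ ψ (adjoint S x) n) := by
  induction n with
  | zero => simp only [kacz, map_smul, adjoint_inner_right]
  | succ n ih => simp only [kacz, ih, map_add, map_smul, ← adjoint_inner_right, map_sub, hRS]

theorem EffectivePair.map {φ ψ : ℕ → H} (h : EffectivePair φ ψ) (S R : H →L[ℂ] K)
    (hRS : ∀ y, adjoint S (R y) = y) (hSR : ∀ x, R (adjoint S x) = x) :
    EffectivePair (fun n => S (φ n)) (fun n => R (ψ n)) := by
  intro x
  have hconv := (R.continuous.tendsto _).comp (h (adjoint S x))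
  rw [hSR] at hconv
  simpa only [Function.comp_def, ← kacz_map S R hRS] using hconv

theorem EffectivePair.map_equiv {φ ψ : ℕ → H} (h : EffectivePair φ ψ) (T : H ≃L[ℂ] K) :
    EffectivePair (fun n => T (φ n)) (fun n => adjoint (T.symm : K →L[ℂ] H) (ψ n)) :=
  h.map (T : H →L[ℂ] K) _ T.adjoint_apply_adjoint_symm_apply
    T.adjoint_symm_apply_adjoint_apply

end Conjugation

theorem effective_pair_iff_conjugated_general
    (φ ψ : ℕ → H) (T : H ≃L[ℂ] H) :
    EffectivePair φ ψ ↔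
      EffectivePair (fun n => T (φ n))
        (fun n => ContinuousLinearMap.adjoint (T.symm : H →L[ℂ] H) (ψ n)) := by
  refine ⟨fun h => h.map_equiv T, fun h => ?_⟩
  simpa using h.map_equiv T.symm

/-- for invertible `T ∈ B(H)`, `(φ, ψ)` is an effective pair iff
`(Tφ, (T⁻¹)*ψ)` is an effective pair. -/
theorem effective_pair_iff_conjugated
    (φ ψ : ℕ → H) (T : H ≃L[ℂ] H)
    (hφdense : (Submodule.span ℂ (Set.range φ)).topologicalClosure = ⊤)
    (hψdense : (Submodule.span ℂ (Set.range ψ)).topologicalClosure = ⊤)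
    (hpair : ∀ n, ⟪ψ n, φ n⟫ = 1) :
    EffectivePair φ ψ ↔
      EffectivePair (fun n => T (φ n))
        (fun n => ContinuousLinearMap.adjoint (T.symm : H →L[ℂ] H) (ψ n)) :=
  effective_pair_iff_conjugated_general φ ψ T
end

section
/- If T is a bounded invertible operator on H applied to the dual Kaczmarz algorithm: the approximations x_n for x using the pair (Tφ_n, (T⁻¹)*ψ_n) satisfy x_n = (T⁻¹)* y_n for all n, where y_n are the approximations for T*x using the pair (φ_n, ψ_n). -/
open scoped ComplexInnerProductSpace
open Filter Topology Finset

variable {H : Type*} [NormedAddCommGroup H] [InnerProductSpace ℂ H] [CompleteSpace H]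

open ContinuousLinearMap in
theorem kacz_map_of_adjoint_comp_eq_id (A S : H →L[ℂ] H) (hAS : adjoint A ∘L S = .id ℂ H)
    (φ ψ : ℕ → H) (x : H) (n : ℕ) :
    kacz (fun n => A (φ n)) (fun n => S (ψ n)) x n = S (kacz φ ψ (adjoint A x) n) := by
  have hcoeff (v u : H) : ⟪A v, x - S u⟫ = ⟪v, adjoint A x - u⟫ := by
    rw [inner_sub_right, inner_sub_right, ← adjoint_inner_right, ← adjoint_inner_right A,
      ← comp_apply, hAS, id_apply]
  induction n with
  | zero => simp only [kacz, map_smul, adjoint_inner_right]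
  | succ n ih => simp only [kacz, ih, hcoeff, map_add, map_smul]

open ContinuousLinearMap in
theorem ContinuousLinearEquiv.adjoint_comp_adjoint_symm (T : H ≃L[ℂ] H) :
    adjoint (T : H →L[ℂ] H) ∘L adjoint (T.symm : H →L[ℂ] H) = .id ℂ H := by
  rw [← adjoint_comp, T.coe_symm_comp_coe, adjoint_id]

/-- the dual Kaczmarz approximations of `x` for the pair
`(Tφ, (T⁻¹)*ψ)` satisfy `x_n = (T⁻¹)* y_n`, where `y_n` are the approximations
of `T* x` for the pair `(φ, ψ)`. -/
theorem kacz_conjugated_eq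
    (φ ψ : ℕ → H) (T : H ≃L[ℂ] H) (x : H) :
    ∀ n : ℕ,
      kacz (fun n => T (φ n))
        (fun n => ContinuousLinearMap.adjoint (T.symm : H →L[ℂ] H) (ψ n)) x n
      = ContinuousLinearMap.adjoint (T.symm : H →L[ℂ] H)
          (kacz φ ψ (ContinuousLinearMap.adjoint (T : H →L[ℂ] H) x) n) :=
  kacz_map_of_adjoint_comp_eq_id (T : H →L[ℂ] H) _ T.adjoint_comp_adjoint_symm φ ψ x
end

section
/- Let T be a bounded invertible operator on H and {e_n} a linearly dense sequence of unit vectors. Then {e_n} is effective (for the classical Kaczmarz algorithm) if and only if both {(Te_n, (T⁻¹)*e_n)} and {((T⁻¹)*e_n, Te_n)} are effective pairs. -/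
open scoped ComplexInnerProductSpace
open Filter Topology Finset

variable {H : Type*} [NormedAddCommGroup H] [InnerProductSpace ℂ H] [CompleteSpace H]

/-!
The dual Kaczmarz iteration is covariant: if `⟪C u, A v⟫ = ⟪u, v⟫` for a linear `A`, then the
iterates of the pair `(C φ, A ψ)` at `A y` are the images under `A` of the iterates of `(φ, ψ)`
at `y`. Both pairs `(T e, (T⁻¹)* e)` and `((T⁻¹)* e, T e)` arise from `(e, e)` in this way, with
`A = (T⁻¹)*` and `A = T` respectively, and an invertible bounded `A` transports convergence of
the iterates in both directions.
-/

open ContinuousLinearMap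

section Adjoint

variable {𝕜 E F : Type*} [RCLike 𝕜]
  [NormedAddCommGroup E] [InnerProductSpace 𝕜 E] [CompleteSpace E]
  [NormedAddCommGroup F] [InnerProductSpace 𝕜 F] [CompleteSpace F]

theorem ContinuousLinearEquiv.adjoint_apply_adjoint_symm_apply_s4 (T : E ≃L[𝕜] F) (v : E) :
    adjoint (T : E →L[𝕜] F) (adjoint (T.symm : F →L[𝕜] E) v) = v :=
  ext_inner_left 𝕜 fun u => by simp [adjoint_inner_right]

theorem ContinuousLinearEquiv.adjoint_symm_apply_adjoint_apply_s4 (T : E ≃L[𝕜] F) (v : F) :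
    adjoint (T.symm : F →L[𝕜] E) (adjoint (T : E →L[𝕜] F) v) = v :=
  ext_inner_left 𝕜 fun u => by simp [adjoint_inner_right]

end Adjoint

omit [CompleteSpace H] in
theorem kacz_map_of_inner_map_map (C : H → H) (A : H →ₗ[ℂ] H)
    (hCA : ∀ u v, ⟪C u, A v⟫ = ⟪u, v⟫) (φ ψ : ℕ → H) (y : H) (n : ℕ) :
    kacz (fun n => C (φ n)) (fun n => A (ψ n)) (A y) n = A (kacz φ ψ y n) := by
  induction n with
  | zero => simp only [kacz, hCA, map_smul]
  | succ n ih => simp only [kacz, ih, ← map_sub, hCA, map_add, map_smul]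

omit [CompleteSpace H] in
theorem effectivePair_map_iff (C : H → H) (A B : H →L[ℂ] H)
    (hBA : ∀ v, B (A v) = v) (hAB : ∀ v, A (B v) = v)
    (hCA : ∀ u v, ⟪C u, A v⟫ = ⟪u, v⟫) (φ ψ : ℕ → H) :
    EffectivePair (fun n => C (φ n)) (fun n => A (ψ n)) ↔ EffectivePair φ ψ := by
  have hkacz : ∀ x,
      kacz (fun n => C (φ n)) (fun n => A (ψ n)) x = fun n => A (kacz φ ψ (B x) n) := fun x =>
    funext fun n => by
      simpa [hAB] using kacz_map_of_inner_map_map C (A : H →ₗ[ℂ] H) hCA φ ψ (B x) n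
  constructor
  · intro h y
    have hB := (B.continuous.tendsto (A y)).comp (h (A y))
    simpa [Function.comp_def, hkacz, hBA] using hB
  · intro h x
    have hA := (A.continuous.tendsto (B x)).comp (h (B x))
    rw [hkacz]
    simpa [Function.comp_def, hAB] using hA

theorem effective_iff_symmetric_effective_pair_general
    (e : ℕ → H) (T : H ≃L[ℂ] H) :
    EffectivePair e e ↔
      (EffectivePair (fun n => T (e n))
          (fun n => ContinuousLinearMap.adjoint (T.symm : H →L[ℂ] H) (e n)) ∧
        EffectivePair
          (fun n => ContinuousLinearMap.adjoint (T.symm : H →L[ℂ] H) (e n))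
          (fun n => T (e n))) := by
  have hS : EffectivePair (fun n => T (e n)) (fun n => adjoint (T.symm : H →L[ℂ] H) (e n)) ↔
      EffectivePair e e :=
    effectivePair_map_iff T _ (adjoint (T : H →L[ℂ] H)) T.adjoint_apply_adjoint_symm_apply_s4
      T.adjoint_symm_apply_adjoint_apply_s4 (fun u v => by simp [adjoint_inner_right]) e e
  have hT : EffectivePair (fun n => adjoint (T.symm : H →L[ℂ] H) (e n)) (fun n => T (e n)) ↔
      EffectivePair e e :=
    effectivePair_map_iff _ T T.symm T.symm_apply_apply T.apply_symm_apply
      (fun u v => by simp [adjoint_inner_left]) e e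
  rw [hS, hT, and_self]

/-- for invertible `T ∈ B(H)` and a linearly dense sequence of unit
vectors `e`, `e` is effective iff `(Te, (T⁻¹)*e)` is a symmetric effective pair. -/
theorem effective_iff_symmetric_effective_pair
    (e : ℕ → H) (T : H ≃L[ℂ] H)
    (hdense : (Submodule.span ℂ (Set.range e)).topologicalClosure = ⊤)
    (hunit : ∀ n, ‖e n‖ = 1) :
    EffectivePair e e ↔
      (EffectivePair (fun n => T (e n))
          (fun n => ContinuousLinearMap.adjoint (T.symm : H →L[ℂ] H) (e n)) ∧
        EffectivePair
          (fun n => ContinuousLinearMap.adjoint (T.symm : H →L[ℂ] H) (e n))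
          (fun n => T (e n))) :=
  effective_iff_symmetric_effective_pair_general e T
end

section
/- Suppose T ∈ B(H) satisfies T g_n = g̃_n for all n, where {g_n}, {g̃_n} are the auxiliary sequences of (φ_n, ψ_n) and (ψ_n, φ_n) respectively, and suppose ⟨φ_n, ψ_k⟩ = ⟨ψ_n, φ_k⟩ for all n, k. Then Tφ_n = ψ_n for all n. -/
open scoped ComplexInnerProductSpace
open Filter Topology Finset

variable {H : Type*} [NormedAddCommGroup H] [InnerProductSpace ℂ H] [CompleteSpace H]

/- By the symmetry hypothesis the recursions for `g` and `gt` use the same coefficients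
`⟪ψ k, φ n⟫`; inverting this unitriangular recursion writes `φ n` and `ψ n` as the same
combinations of the `g k` and of the `gt k`. -/

theorem map_eq_of_eq_sub_sum_smul {R M N F : Type*} [Ring R] [AddCommGroup M]
    [AddCommGroup N] [Module R M] [Module R N] [FunLike F M N] [LinearMapClass F R M N]
    (T : F) {φ g : ℕ → M} {ψ gt : ℕ → N} (hT : ∀ k, T (g k) = gt k) (n : ℕ) (c : ℕ → R)
    (hg : g n = φ n - ∑ k ∈ range n, c k • g k)
    (hgt : gt n = ψ n - ∑ k ∈ range n, c k • gt k) :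
    T (φ n) = ψ n := by
  have hφ : φ n = g n + ∑ k ∈ range n, c k • g k := by rw [hg]; abel
  rw [hφ, map_add, map_sum]
  simp only [map_smul, hT]
  rw [hgt]
  abel

/-- if `T g_n = g̃_n` and `⟨φ_n, ψ_k⟩ = ⟨ψ_n, φ_k⟩` for all `n, k`,
then `T φ_n = ψ_n`. -/
theorem map_phi_eq_psi_of_map_aux
    (φ ψ g gt : ℕ → H) (T : H →L[ℂ] H)
    (hg0 : g 0 = φ 0)
    (hg : ∀ n, g (n + 1)
        = φ (n + 1) - ∑ k ∈ Finset.range (n + 1), ⟪ψ k, φ (n + 1)⟫ • g k)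
    (hgt0 : gt 0 = ψ 0)
    (hgt : ∀ n, gt (n + 1)
        = ψ (n + 1) - ∑ k ∈ Finset.range (n + 1), ⟪φ k, ψ (n + 1)⟫ • gt k)
    (hT : ∀ n, T (g n) = gt n)
    (hsym : ∀ n k, ⟪ψ k, φ n⟫ = ⟪φ k, ψ n⟫) :
    ∀ n, T (φ n) = ψ n := by
  have hg' : ∀ n, g n = φ n - ∑ k ∈ range n, ⟪ψ k, φ n⟫ • g k := by
    rintro (_ | n)
    · simp [hg0]
    · exact hg n
  have hgt' : ∀ n, gt n = ψ n - ∑ k ∈ range n, ⟪ψ k, φ n⟫ • gt k := by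
    rintro (_ | n)
    · simp [hgt0]
    · simp only [hsym, hgt n]
  exact fun n ↦ map_eq_of_eq_sub_sum_smul T hT n _ (hg' n) (hgt' n)
end

section
/- Suppose T ∈ B(H) is positive with Tφ_n = ψ_n for all n, and define e_n = T^{1/2} φ_n. Then the classical Kaczmarz auxiliary sequence {h_n} of {e_n} satisfies h_n = T^{1/2} g_n for all n, where {g_n} is the auxiliary sequence of the pair (φ_n, ψ_n). -/
open scoped ComplexInnerProductSpace
open Filter Topology Finset

variable {H : Type*} [NormedAddCommGroup H] [InnerProductSpace ℂ H] [CompleteSpace H]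

/-! Both auxiliary sequences are produced by the same Gram–Schmidt-type recursion, and the
recursion for `h` is the image under `T^{1/2}` of the one for `g`: its coefficients agree,
since `⟪T^{1/2} φ_k, T^{1/2} φ_m⟫ = ⟪T φ_k, φ_m⟫ = ⟪ψ_k, φ_m⟫` by self-adjointness of
`T^{1/2}`. -/

theorem eq_map_of_sub_sum_recursion {R M N : Type*} [Ring R] [AddCommGroup M] [Module R M]
    [AddCommGroup N] [Module R N] (L : M →ₗ[R] N) (c : ℕ → ℕ → R) (φ g : ℕ → M) (h : ℕ → N)
    (hg0 : g 0 = φ 0)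
    (hg : ∀ n, g (n + 1) = φ (n + 1) - ∑ k ∈ range (n + 1), c k (n + 1) • g k)
    (hh0 : h 0 = L (φ 0))
    (hh : ∀ n, h (n + 1) = L (φ (n + 1)) - ∑ k ∈ range (n + 1), c k (n + 1) • h k) :
    ∀ n, h n = L (g n) := by
  intro n
  induction n using Nat.strong_induction_on with
  | _ n ih =>
    cases n with
    | zero => rw [hh0, hg0]
    | succ n =>
      rw [hh n, hg n, map_sub, map_sum]
      congr 1
      refine sum_congr rfl fun k hk => ?_
      rw [ih k (mem_range.mp hk), map_smul]

theorem aux_of_sqrt_eq_sqrt_aux_general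
    (φ ψ g e h : ℕ → H) (T R : H →L[ℂ] H)
    (hRpos : R.IsPositive) (hRsq : R ∘L R = T)
    (hTφ : ∀ n, T (φ n) = ψ n)
    (he : ∀ n, e n = R (φ n))
    (hg0 : g 0 = φ 0)
    (hg : ∀ n, g (n + 1)
        = φ (n + 1) - ∑ k ∈ Finset.range (n + 1), ⟪ψ k, φ (n + 1)⟫ • g k)
    (hh0 : h 0 = e 0)
    (hh : ∀ n, h (n + 1)
        = e (n + 1) - ∑ k ∈ Finset.range (n + 1), ⟪e k, e (n + 1)⟫ • h k) :
    ∀ n, h n = R (g n) := by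
  have gram : ∀ k m, ⟪e k, e m⟫ = ⟪ψ k, φ m⟫ := fun k m => by
    rw [he, he, ← hTφ, ← hRsq, ContinuousLinearMap.comp_apply]
    exact (hRpos.inner_left_eq_inner_right _ _).symm
  refine eq_map_of_sub_sum_recursion (R : H →ₗ[ℂ] H) (fun k m => ⟪ψ k, φ m⟫) φ g h hg0 hg
    (by rw [hh0, he]; rfl) fun n => ?_
  simp only [hh n, he (n + 1), ← gram]
  rfl

/-- if `T` is positive with `Tφ_n = ψ_n`, `R = T^{1/2}` is its positive
square root, and `e_n = T^{1/2} φ_n`, then the classical Kaczmarz auxiliary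
sequence `h` of `e` satisfies `h_n = T^{1/2} g_n`. -/
theorem aux_of_sqrt_eq_sqrt_aux
    (φ ψ g e h : ℕ → H) (T R : H →L[ℂ] H)
    (hTpos : T.IsPositive) (hRpos : R.IsPositive) (hRsq : R ∘L R = T)
    (hTφ : ∀ n, T (φ n) = ψ n)
    (he : ∀ n, e n = R (φ n))
    (hg0 : g 0 = φ 0)
    (hg : ∀ n, g (n + 1)
        = φ (n + 1) - ∑ k ∈ Finset.range (n + 1), ⟪ψ k, φ (n + 1)⟫ • g k)
    (hh0 : h 0 = e 0)
    (hh : ∀ n, h (n + 1)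
        = e (n + 1) - ∑ k ∈ Finset.range (n + 1), ⟪e k, e (n + 1)⟫ • h k) :
    ∀ n, h n = R (g n) :=
  aux_of_sqrt_eq_sqrt_aux_general φ ψ g e h T R hRpos hRsq hTφ he hg0 hg hh0 hh
end

section
/- If T ∈ B(H) is positive and invertible with Tφ_n = ψ_n for all n, then T g_n = g̃_n for all n, where {g_n} and {g̃_n} are the auxiliary sequences of (φ_n, ψ_n) and (ψ_n, φ_n) respectively. -/
open scoped ComplexInnerProductSpace
open Filter Topology Finset

variable {H : Type*} [NormedAddCommGroup H] [InnerProductSpace ℂ H] [CompleteSpace H]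

/-! Since `T` is self-adjoint, `⟪ψ k, φ n⟫ = ⟪Tφ k, φ n⟫ = ⟪φ k, Tφ n⟫ = ⟪φ k, ψ n⟫`: the
recursions defining `g` and `g̃` have the same coefficients and differ only in their generators
`φ` and `ψ = Tφ`, so by strong induction the linear map `T` carries one sequence to the other. -/

theorem LinearMap.map_eq_of_triangular_recursion {R E F : Type*} [Ring R]
    [AddCommGroup E] [Module R E] [AddCommGroup F] [Module R F] (T : E →ₗ[R] F)
    (c : ℕ → ℕ → R) {φ g : ℕ → E} {ψ h : ℕ → F} (hTφ : ∀ n, T (φ n) = ψ n)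
    (hg0 : g 0 = φ 0)
    (hg : ∀ n, g (n + 1) = φ (n + 1) - ∑ k ∈ Finset.range (n + 1), c k (n + 1) • g k)
    (hh0 : h 0 = ψ 0)
    (hh : ∀ n, h (n + 1) = ψ (n + 1) - ∑ k ∈ Finset.range (n + 1), c k (n + 1) • h k) :
    ∀ n, T (g n) = h n := by
  intro n
  induction n using Nat.strong_induction_on with
  | _ n ih =>
    cases n with
    | zero => rw [hg0, hh0, hTφ]
    | succ n =>
      rw [hg n, hh n, map_sub, hTφ, map_sum]
      congr 1
      refine Finset.sum_congr rfl fun k hk => ?_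
      rw [map_smul, ih k (Finset.mem_range.mp hk)]

/-- if `T` is positive and invertible with `Tφ_n = ψ_n`, then
`T g_n = g̃_n` for all `n`. -/
theorem map_aux_of_map_phi
    (φ ψ g gt : ℕ → H) (T : H ≃L[ℂ] H)
    (hTpos : (T : H →L[ℂ] H).IsPositive)
    (hTφ : ∀ n, T (φ n) = ψ n)
    (hg0 : g 0 = φ 0)
    (hg : ∀ n, g (n + 1)
        = φ (n + 1) - ∑ k ∈ Finset.range (n + 1), ⟪ψ k, φ (n + 1)⟫ • g k)
    (hgt0 : gt 0 = ψ 0)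
    (hgt : ∀ n, gt (n + 1)
        = ψ (n + 1) - ∑ k ∈ Finset.range (n + 1), ⟪φ k, ψ (n + 1)⟫ • gt k) :
    ∀ n, T (g n) = gt n := by
  have hsymm : ∀ k n, ⟪φ k, ψ n⟫ = ⟪ψ k, φ n⟫ := fun k n => by
    rw [← hTφ k, ← hTφ n]
    exact (hTpos.isSelfAdjoint.isSymmetric (φ k) (φ n)).symm
  refine ((T : H →L[ℂ] H) : H →ₗ[ℂ] H).map_eq_of_triangular_recursion
    (fun k n => ⟪ψ k, φ n⟫) hTφ hg0 hg hgt0 ?_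
  simpa only [hsymm] using hgt
end

section
/- Suppose {φ_n}, {ψ_n} are linearly dense in H with ⟨φ_n, ψ_n⟩ = 1 and there exists a positive invertible T ∈ B(H) with Tφ_n = ψ_n. If {(φ_n, ψ_n)} and {(ψ_n, φ_n)} are both effective pairs, then the auxiliary sequences {g_n} and {g̃_n} are canonical dual frames, and T⁻¹ is the frame operator of {g_n}. -/
open scoped ComplexInnerProductSpace
open Filter Topology Finset

variable {H : Type*} [NormedAddCommGroup H] [InnerProductSpace ℂ H] [CompleteSpace H]

/-- `f` is a frame with bounds `0 < A ≤ B`. -/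
def IsFrame (f : ℕ → H) : Prop :=
  ∃ A B : ℝ, 0 < A ∧ A ≤ B ∧
    ∀ x : H, A * ‖x‖ ^ 2 ≤ ∑' n, ‖⟪f n, x⟫‖ ^ 2 ∧ ∑' n, ‖⟪f n, x⟫‖ ^ 2 ≤ B * ‖x‖ ^ 2

/-!
Put `S = T⁻¹`, so that `S ψₙ = φₙ` and `S` is self-adjoint. Writing the Kaczmarz approximations
as `x_N = ∑_{k ≤ N} ⟪g k, x⟫ ψ k`, each step of the iteration lowers `⟪S (x - x_N), y - y_N⟫` by
exactly `⟪x, g N⟫ ⟪g N, y⟫`, because `⟪φ N, ψ N⟫ = 1`. Effectiveness drives the residuals to `0`,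
whence `∑ ⟪x, g n⟫ ⟪g n, y⟫ = ⟪S x, y⟫`: `g` is a Bessel sequence with frame operator `S`. The
lower frame bound comes from `x = T (S x)` and the Bessel bound for `S x = ∑ ⟪g n, x⟫ • g n`.
Finally `g̃ = T g` by induction, `T` being symmetric.
-/

theorem summable_of_norm_sq_sum_le {ι E : Type*} [SeminormedAddCommGroup E] [CompleteSpace E]
    {v : ι → E} {a : ι → ℝ} (ha : Summable a)
    (h : ∀ t : Finset ι, ‖∑ n ∈ t, v n‖ ^ 2 ≤ ∑ n ∈ t, a n) : Summable v := by
  refine summable_iff_vanishing_norm.mpr fun ε hε => ?_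
  obtain ⟨s, hs⟩ := summable_iff_vanishing_norm.mp ha (ε ^ 2) (by positivity)
  refine ⟨s, fun t ht => lt_of_pow_lt_pow_left₀ 2 hε.le ?_⟩
  exact (h t).trans_lt ((le_abs_self _).trans_lt (hs t ht))

section Bessel

variable {ι E : Type*} [NormedAddCommGroup E] [InnerProductSpace ℂ E]

theorem norm_sq_sum_smul_le_of_bessel {g : ι → E} {B : ℝ} (hB0 : 0 ≤ B)
    (hB : ∀ (z : E) (t : Finset ι), ∑ n ∈ t, ‖⟪g n, z⟫‖ ^ 2 ≤ B * ‖z‖ ^ 2)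
    (c : ι → ℂ) (t : Finset ι) :
    ‖∑ n ∈ t, c n • g n‖ ^ 2 ≤ B * ∑ n ∈ t, ‖c n‖ ^ 2 := by
  set z := ∑ n ∈ t, c n • g n
  set P := ∑ n ∈ t, ‖c n‖ ^ 2
  have hP : 0 ≤ P := by positivity
  have hz : ‖z‖ ^ 2 ≤ ∑ n ∈ t, ‖c n‖ * ‖⟪g n, z⟫‖ := by
    rw [← inner_self_eq_norm_sq (𝕜 := ℂ)]
    calc RCLike.re ⟪z, z⟫ ≤ ‖⟪z, z⟫‖ := RCLike.re_le_norm _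
      _ = ‖∑ n ∈ t, (starRingEnd ℂ) (c n) * ⟪g n, z⟫‖ := by
        simp only [z, sum_inner, inner_smul_left]
      _ ≤ ∑ n ∈ t, ‖c n‖ * ‖⟪g n, z⟫‖ := by
        refine (norm_sum_le _ _).trans (sum_le_sum fun n _ => ?_)
        rw [norm_mul, RCLike.norm_conj]
  have hCS := sum_mul_sq_le_sq_mul_sq t (fun n => ‖c n‖) (fun n => ‖⟪g n, z⟫‖)
  have hzz : ‖z‖ ^ 2 * ‖z‖ ^ 2 ≤ (B * P) * ‖z‖ ^ 2 := by
    nlinarith [mul_le_mul_of_nonneg_left (hB z t) hP, sq_nonneg (‖z‖ ^ 2)]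
  rcases (sq_nonneg ‖z‖).eq_or_lt with h | h
  · rw [← h]
    positivity
  · exact le_of_mul_le_mul_right hzz h

theorem summable_smul_of_bessel [CompleteSpace E] {g : ι → E} {B : ℝ} (hB0 : 0 ≤ B)
    (hB : ∀ (z : E) (t : Finset ι), ∑ n ∈ t, ‖⟪g n, z⟫‖ ^ 2 ≤ B * ‖z‖ ^ 2)
    {c : ι → ℂ} (hc : Summable fun n => ‖c n‖ ^ 2) : Summable fun n => c n • g n :=
  summable_of_norm_sq_sum_le (hc.mul_left B) fun t => by
    simpa only [mul_sum] using norm_sq_sum_smul_le_of_bessel hB0 hB c t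

theorem norm_sq_tsum_smul_le_of_bessel [CompleteSpace E] {g : ι → E} {B : ℝ} (hB0 : 0 ≤ B)
    (hB : ∀ (z : E) (t : Finset ι), ∑ n ∈ t, ‖⟪g n, z⟫‖ ^ 2 ≤ B * ‖z‖ ^ 2)
    {c : ι → ℂ} (hc : Summable fun n => ‖c n‖ ^ 2) :
    ‖∑' n, c n • g n‖ ^ 2 ≤ B * ∑' n, ‖c n‖ ^ 2 := by
  have hlim := ((summable_smul_of_bessel hB0 hB hc).hasSum.norm).pow 2
  refine le_of_tendsto' hlim fun t => (norm_sq_sum_smul_le_of_bessel hB0 hB c t).trans ?_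
  gcongr
  exact hc.sum_le_tsum t fun n _ => sq_nonneg _

end Bessel

section FrameExpansion

variable {E : Type*} [NormedAddCommGroup E] [InnerProductSpace ℂ E] {g : ℕ → E} {S : E →L[ℂ] E}

theorem hasSum_norm_inner_sq_of_tendsto {x : E}
    (h : Tendsto (fun N => ∑ k ∈ range N, ⟪x, g k⟫ * ⟪g k, x⟫) atTop (𝓝 ⟪S x, x⟫)) :
    HasSum (fun n => ‖⟪g n, x⟫‖ ^ 2) (RCLike.re ⟪S x, x⟫) := by
  have hterm : ∀ k, ⟪x, g k⟫ * ⟪g k, x⟫ = ((‖⟪g k, x⟫‖ ^ 2 : ℝ) : ℂ) := fun k => by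
    rw [← inner_conj_symm x (g k), Complex.conj_mul', Complex.ofReal_pow]
  simp only [hterm, ← Complex.ofReal_sum] at h
  exact (hasSum_iff_tendsto_nat_of_nonneg (fun _ => sq_nonneg _) _).mpr
    ((Complex.continuous_re.tendsto _).comp h)

theorem sum_norm_inner_sq_le_of_tendsto
    (h : ∀ x, Tendsto (fun N => ∑ k ∈ range N, ⟪x, g k⟫ * ⟪g k, x⟫) atTop (𝓝 ⟪S x, x⟫))
    (z : E) (t : Finset ℕ) : ∑ n ∈ t, ‖⟪g n, z⟫‖ ^ 2 ≤ ‖S‖ * ‖z‖ ^ 2 := by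
  have hz := hasSum_norm_inner_sq_of_tendsto (h z)
  calc ∑ n ∈ t, ‖⟪g n, z⟫‖ ^ 2 ≤ RCLike.re ⟪S z, z⟫ :=
        sum_le_hasSum t (fun _ _ => sq_nonneg _) hz
    _ ≤ ‖S z‖ * ‖z‖ := re_inner_le_norm _ _
    _ ≤ ‖S‖ * ‖z‖ ^ 2 := by
      rw [sq, ← mul_assoc]
      exact mul_le_mul_of_nonneg_right (S.le_opNorm z) (norm_nonneg z)

theorem hasSum_inner_smul_of_tendsto [CompleteSpace E] (hS : (S : E →ₗ[ℂ] E).IsSymmetric)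
    (h : ∀ x y, Tendsto (fun N => ∑ k ∈ range N, ⟪x, g k⟫ * ⟪g k, y⟫) atTop (𝓝 ⟪S x, y⟫))
    (y : E) : HasSum (fun n => ⟪g n, y⟫ • g n) (S y) := by
  obtain ⟨L, hL⟩ := summable_smul_of_bessel (norm_nonneg S)
    (sum_norm_inner_sq_le_of_tendsto fun x => h x x)
    (hasSum_norm_inner_sq_of_tendsto (h y y)).summable
  suffices L = S y from this ▸ hL
  refine ext_inner_left ℂ fun w => ?_
  have hw : HasSum (fun n => ⟪w, g n⟫ * ⟪g n, y⟫) ⟪w, L⟫ := by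
    simpa only [innerSL_apply_apply, inner_smul_right, mul_comm] using (innerSL ℂ w).hasSum hL
  rw [tendsto_nhds_unique hw.tendsto_sum_nat (h w y)]
  exact hS w y

-- Shifting the constants by one keeps the frame bounds positive and ordered even when `a = 0`.
theorem isFrame_of_bounds {f : ℕ → E} {a b : ℝ} (ha : 0 ≤ a) (hb : 0 ≤ b)
    (hlow : ∀ x, ‖x‖ ^ 2 ≤ a * ∑' n, ‖⟪f n, x⟫‖ ^ 2)
    (hup : ∀ x, ∑' n, ‖⟪f n, x⟫‖ ^ 2 ≤ b * ‖x‖ ^ 2) : IsFrame f := by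
  refine ⟨(a + 1)⁻¹, b + 1, by positivity,
    (inv_le_one_of_one_le₀ (by linarith)).trans (by linarith), fun x => ⟨?_, ?_⟩⟩
  · have hnonneg : 0 ≤ ∑' n, ‖⟪f n, x⟫‖ ^ 2 := tsum_nonneg fun _ => sq_nonneg _
    rw [inv_mul_le_iff₀ (by positivity)]
    nlinarith [hlow x]
  · nlinarith [hup x, sq_nonneg ‖x‖]

theorem isFrame_of_tendsto [CompleteSpace E] (hS : (S : E →ₗ[ℂ] E).IsSymmetric)
    (h : ∀ x y, Tendsto (fun N => ∑ k ∈ range N, ⟪x, g k⟫ * ⟪g k, y⟫) atTop (𝓝 ⟪S x, y⟫))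
    {C : ℝ} (hC : ∀ x, ‖x‖ ≤ C * ‖S x‖) : IsFrame g := by
  have hsum := fun x => hasSum_norm_inner_sq_of_tendsto (h x x)
  have hbessel := sum_norm_inner_sq_le_of_tendsto fun x => h x x
  refine isFrame_of_bounds (a := C ^ 2 * ‖S‖) (by positivity) (norm_nonneg S) (fun x => ?_)
    fun x => (hsum x).summable.tsum_le_of_sum_le (hbessel x)
  calc ‖x‖ ^ 2 ≤ C ^ 2 * ‖S x‖ ^ 2 := by
        rw [← mul_pow]; exact pow_le_pow_left₀ (norm_nonneg x) (hC x) 2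
    _ = C ^ 2 * ‖∑' n, ⟪g n, x⟫ • g n‖ ^ 2 := by
        rw [(hasSum_inner_smul_of_tendsto hS h x).tsum_eq]
    _ ≤ C ^ 2 * ‖S‖ * ∑' n, ‖⟪g n, x⟫‖ ^ 2 := by
        rw [mul_assoc]
        gcongr
        exact norm_sq_tsum_smul_le_of_bessel (norm_nonneg S) hbessel (hsum x).summable

end FrameExpansion

section Kaczmarz

variable {E : Type*} [NormedAddCommGroup E] [InnerProductSpace ℂ E] {φ ψ g : ℕ → E}

def IsAuxiliarySeq (φ ψ g : ℕ → E) : Prop :=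
  ∀ n, g n = φ n - ∑ k ∈ range n, ⟪ψ k, φ n⟫ • g k

theorem isAuxiliarySeq_of_zero_of_succ (h0 : g 0 = φ 0)
    (hsucc : ∀ n, g (n + 1) = φ (n + 1) - ∑ k ∈ range (n + 1), ⟪ψ k, φ (n + 1)⟫ • g k) :
    IsAuxiliarySeq φ ψ g
  | 0 => by simpa using h0
  | n + 1 => hsucc n

theorem inner_map_sub_smul_sub_smul {S : E →ₗ[ℂ] E} (hS : S.IsSymmetric) {a b : E}
    (hSb : S b = a) (hba : ⟪b, a⟫ = 1) (u v : E) :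
    ⟪S (u - ⟪a, u⟫ • b), v - ⟪a, v⟫ • b⟫ = ⟪S u, v⟫ - ⟪u, a⟫ * ⟪a, v⟫ := by
  have hab : ⟪a, b⟫ = 1 := by rw [← inner_conj_symm, hba, map_one]
  have hSu : ⟪S u, b⟫ = ⟪u, a⟫ := by rw [hS, hSb]
  rw [map_sub, map_smul, inner_sub_left, inner_sub_right, inner_sub_right, inner_smul_right,
    inner_smul_left, inner_smul_left, inner_smul_right, hSu, hSb, hab, inner_conj_symm]
  ring

namespace IsAuxiliarySeq

theorem inner_sub_sum (hg : IsAuxiliarySeq φ ψ g) (x : E) (n : ℕ) :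
    ⟪φ n, x - ∑ k ∈ range n, ⟪g k, x⟫ • ψ k⟫ = ⟪g n, x⟫ := by
  rw [hg n, inner_sub_left, inner_sub_right, inner_sum, sum_inner]
  congr 1
  refine sum_congr rfl fun k _ => ?_
  rw [inner_smul_left, inner_smul_right, inner_conj_symm, mul_comm]

theorem kacz_eq_sum (hg : IsAuxiliarySeq φ ψ g) (x : E) (n : ℕ) :
    kacz φ ψ x n = ∑ k ∈ range (n + 1), ⟪g k, x⟫ • ψ k := by
  induction n with
  | zero => simpa [kacz] using congrArg (· • ψ 0) (hg.inner_sub_sum x 0)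
  | succ n ih => rw [kacz, ih, hg.inner_sub_sum, sum_range_succ _ (n + 1)]

theorem inner_map_residual (hg : IsAuxiliarySeq φ ψ g) {S : E →ₗ[ℂ] E} (hS : S.IsSymmetric)
    (hSψ : ∀ n, S (ψ n) = φ n) (hpair : ∀ n, ⟪ψ n, φ n⟫ = 1) (x y : E) (N : ℕ) :
    ⟪S (x - ∑ k ∈ range N, ⟪g k, x⟫ • ψ k), y - ∑ k ∈ range N, ⟪g k, y⟫ • ψ k⟫
      = ⟪S x, y⟫ - ∑ k ∈ range N, ⟪x, g k⟫ * ⟪g k, y⟫ := by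
  induction N with
  | zero => simp
  | succ N ih =>
    have hres : ∀ z, z - ∑ k ∈ range (N + 1), ⟪g k, z⟫ • ψ k
        = (z - ∑ k ∈ range N, ⟪g k, z⟫ • ψ k)
          - ⟪φ N, z - ∑ k ∈ range N, ⟪g k, z⟫ • ψ k⟫ • ψ N := fun z => by
      rw [hg.inner_sub_sum, sum_range_succ, sub_add_eq_sub_sub]
    rw [hres, hres, inner_map_sub_smul_sub_smul hS (hSψ N) (hpair N), ih,
      ← inner_conj_symm _ (φ N), hg.inner_sub_sum, hg.inner_sub_sum, inner_conj_symm,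
      sum_range_succ]
    ring

theorem tendsto_sum_inner_mul_inner (hg : IsAuxiliarySeq φ ψ g) (heff : EffectivePair φ ψ)
    {S : E →L[ℂ] E} (hS : (S : E →ₗ[ℂ] E).IsSymmetric) (hSψ : ∀ n, S (ψ n) = φ n)
    (hpair : ∀ n, ⟪ψ n, φ n⟫ = 1) (x y : E) :
    Tendsto (fun N => ∑ k ∈ range N, ⟪x, g k⟫ * ⟪g k, y⟫) atTop (𝓝 ⟪S x, y⟫) := by
  have hres : ∀ z, Tendsto (fun N => z - ∑ k ∈ range (N + 1), ⟪g k, z⟫ • ψ k) atTop (𝓝 0) :=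
    fun z => by
      simpa only [← hg.kacz_eq_sum, sub_self] using (tendsto_const_nhds (x := z)).sub (heff z)
  have hinner := ((S.continuous.tendsto 0).comp (hres x)).inner (𝕜 := ℂ) (hres y)
  rw [map_zero, inner_zero_left] at hinner
  have hsum : ∀ N, ∑ k ∈ range (N + 1), ⟪x, g k⟫ * ⟪g k, y⟫ = ⟪S x, y⟫
      - ⟪S (x - ∑ k ∈ range (N + 1), ⟪g k, x⟫ • ψ k), y - ∑ k ∈ range (N + 1), ⟪g k, y⟫ • ψ k⟫ :=
    fun N => by
      have h := hg.inner_map_residual hS hSψ hpair x y (N + 1)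
      rw [ContinuousLinearMap.coe_coe] at h
      rw [h, sub_sub_cancel]
  rw [← tendsto_add_atTop_iff_nat 1]
  simpa only [hsum, sub_zero, Function.comp_apply] using tendsto_const_nhds.sub hinner

theorem eq_map_of_swap {gt : ℕ → E} (hg : IsAuxiliarySeq φ ψ g)
    (hgt : IsAuxiliarySeq ψ φ gt) {T : E →ₗ[ℂ] E} (hT : T.IsSymmetric) (hTφ : ∀ n, T (φ n) = ψ n)
    (n : ℕ) : gt n = T (g n) := by
  induction n using Nat.strong_induction_on with
  | _ n ih =>
    rw [hgt n, hg n, map_sub, map_sum, hTφ]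
    congr 1
    refine sum_congr rfl fun k hk => ?_
    rw [ih k (mem_range.mp hk), map_smul, ← hTφ n, ← hT, hTφ]

end IsAuxiliarySeq

end Kaczmarz

theorem canonical_dual_aux_of_symmetric_effective_pair_general
    (φ ψ g gt : ℕ → H) (T : H ≃L[ℂ] H)
    (hpair : ∀ n, ⟪ψ n, φ n⟫ = 1)
    (hTpos : (T : H →L[ℂ] H).IsPositive)
    (hTφ : ∀ n, T (φ n) = ψ n)
    (hg0 : g 0 = φ 0)
    (hg : ∀ n, g (n + 1)
        = φ (n + 1) - ∑ k ∈ Finset.range (n + 1), ⟪ψ k, φ (n + 1)⟫ • g k)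
    (hgt0 : gt 0 = ψ 0)
    (hgt : ∀ n, gt (n + 1)
        = ψ (n + 1) - ∑ k ∈ Finset.range (n + 1), ⟪φ k, ψ (n + 1)⟫ • gt k)
    (heff : EffectivePair φ ψ) :
    IsFrame g ∧ (∀ x : H, HasSum (fun n => ⟪g n, x⟫ • g n) (T.symm x)) ∧
      ∀ n, gt n = T (g n) := by
  have haux : IsAuxiliarySeq φ ψ g := isAuxiliarySeq_of_zero_of_succ hg0 hg
  have hT : (T : H →ₗ[ℂ] H).IsSymmetric := hTpos.isSymmetric
  have hS : ((T.symm : H →L[ℂ] H) : H →ₗ[ℂ] H).IsSymmetric :=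
    LinearMap.IsSymmetric.toLinearMap_symm (T := T.toLinearEquiv) hT
  have hSψ : ∀ n, T.symm (ψ n) = φ n := fun n => by rw [← hTφ, T.symm_apply_apply]
  have hweak := haux.tendsto_sum_inner_mul_inner heff hS hSψ hpair
  refine ⟨isFrame_of_tendsto hS hweak (C := ‖(T : H →L[ℂ] H)‖) fun x => ?_,
    hasSum_inner_smul_of_tendsto hS hweak,
    haux.eq_map_of_swap (isAuxiliarySeq_of_zero_of_succ hgt0 hgt) hT hTφ⟩
  simpa using (T : H →L[ℂ] H).le_opNorm (T.symm x)

/-- if `⟨φ_n, ψ_n⟩ = 1`, there is a positive invertible `T` with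
`Tφ_n = ψ_n`, and `(φ, ψ)` and `(ψ, φ)` are both effective pairs, then the
auxiliary sequences `g, g̃` are canonical dual frames and `T⁻¹` is the frame
operator of `g` (so `g̃_n = T g_n`). -/
theorem canonical_dual_aux_of_symmetric_effective_pair
    (φ ψ g gt : ℕ → H) (T : H ≃L[ℂ] H)
    (hφdense : (Submodule.span ℂ (Set.range φ)).topologicalClosure = ⊤)
    (hψdense : (Submodule.span ℂ (Set.range ψ)).topologicalClosure = ⊤)
    (hpair : ∀ n, ⟪ψ n, φ n⟫ = 1)
    (hTpos : (T : H →L[ℂ] H).IsPositive)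
    (hTφ : ∀ n, T (φ n) = ψ n)
    (hg0 : g 0 = φ 0)
    (hg : ∀ n, g (n + 1)
        = φ (n + 1) - ∑ k ∈ Finset.range (n + 1), ⟪ψ k, φ (n + 1)⟫ • g k)
    (hgt0 : gt 0 = ψ 0)
    (hgt : ∀ n, gt (n + 1)
        = ψ (n + 1) - ∑ k ∈ Finset.range (n + 1), ⟪φ k, ψ (n + 1)⟫ • gt k)
    (heff : EffectivePair φ ψ) (heff' : EffectivePair ψ φ) :
    IsFrame g ∧ (∀ x : H, HasSum (fun n => ⟪g n, x⟫ • g n) (T.symm x)) ∧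
      ∀ n, gt n = T (g n) :=
  canonical_dual_aux_of_symmetric_effective_pair_general φ ψ g gt T hpair hTpos hTφ hg0 hg hgt0 hgt
    heff
end

section
/- Let {φ_n} and {ψ_n} be linearly dense sequences in a finite-dimensional Hilbert space H_N. If the mixed Grammian matrix G_{m,n} = ⟨ψ_m, φ_n⟩ is positive semidefinite, then there exists a positive invertible operator T on H_N such that Tφ_n = ψ_n for all n. -/
open scoped ComplexInnerProductSpace ComplexOrder
open Filter Topology Finset

variable {H : Type*} [NormedAddCommGroup H] [InnerProductSpace ℂ H] [CompleteSpace H]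

/-! The form `B a b = ⟪∑ aₙ φₙ, ∑ bₙ ψₙ⟫` on finitely supported coefficient sequences is
nonnegative on the diagonal, hence Hermitian by polarization. Hermitian symmetry turns
`∑ aₙ φₙ = 0` into `⟪∑ bₙ φₙ, ∑ aₙ ψₙ⟫ = 0` for all `b`, so `∑ aₙ ψₙ = 0` because the `φₙ` span.
Hence `φₙ ↦ ψₙ` extends to a linear map `T` with `⟪x, T x⟫ ≥ 0`, which is onto because the `ψₙ`
span, and so invertible in finite dimension. -/

theorem LinearMap.exists_comp_eq_of_ker_le {R M N P : Type*} [Ring R] [AddCommGroup M]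
    [Module R M] [AddCommGroup N] [Module R N] [AddCommGroup P] [Module R P] {f : M →ₗ[R] N}
    (hf : Function.Surjective f) {g : M →ₗ[R] P} (h : LinearMap.ker f ≤ LinearMap.ker g) :
    ∃ T : N →ₗ[R] P, T ∘ₗ f = g :=
  ⟨(LinearMap.ker f).liftQ g h ∘ₗ (f.quotKerEquivOfSurjective hf).symm.toLinearMap,
    LinearMap.ext fun x => by simp⟩

section Sesquilinear

variable {M : Type*} [AddCommGroup M] [Module ℂ M]

theorem LinearMap.isSymm_of_forall_im_eq_zero {B : M →ₗ⋆[ℂ] M →ₗ[ℂ] ℂ}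
    (hB : ∀ x, (B x x).im = 0) : B.IsSymm := by
  refine LinearMap.isSymm_def.2 fun x y => ?_
  have him : (B x y).im + (B y x).im = 0 := by simpa [hB x, hB y] using hB (x + y)
  have hre : (B x y).re + -(B y x).re = 0 := by
    simpa [hB x, hB y] using hB (x + Complex.I • y)
  apply Complex.ext
  · rw [Complex.conj_re]; linarith
  · rw [Complex.conj_im]; linarith

theorem LinearMap.isSymm_of_forall_nonneg {B : M →ₗ⋆[ℂ] M →ₗ[ℂ] ℂ} (hB : ∀ x, 0 ≤ B x x) :
    B.IsSymm :=
  isSymm_of_forall_im_eq_zero fun x => (Complex.nonneg_iff.1 (hB x)).2.symm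

end Sesquilinear

section InnerProductSpace

variable {ι E : Type*} [NormedAddCommGroup E] [InnerProductSpace ℂ E]

theorem LinearMap.isPositive_of_forall_inner_nonneg {T : E →ₗ[ℂ] E}
    (hT : ∀ x, 0 ≤ ⟪x, T x⟫) : T.IsPositive := by
  have hsymm : T.IsSymmetric := fun x y => by
    simpa using (isSymm_def.1 (isSymm_of_forall_nonneg (B := (innerₛₗ ℂ).compl₂ T) hT) y x)
  exact (T.isPositive_iff).2 ⟨hsymm, fun x => hsymm x x ▸ hT x⟩

/-- `mixedGramForm φ ψ (single n 1) (single m 1)` is the paper's `G_{m,n} = ⟨ψ_m, φ_n⟩`. -/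
noncomputable def mixedGramForm (φ ψ : ι → E) : (ι →₀ ℂ) →ₗ⋆[ℂ] (ι →₀ ℂ) →ₗ[ℂ] ℂ :=
  ((innerₛₗ ℂ).comp (Finsupp.linearCombination ℂ φ)).compl₂ (Finsupp.linearCombination ℂ ψ)

theorem mixedGramForm_apply (φ ψ : ι → E) (a b : ι →₀ ℂ) :
    mixedGramForm φ ψ a b =
      ⟪Finsupp.linearCombination ℂ φ a, Finsupp.linearCombination ℂ ψ b⟫ :=
  rfl

theorem ker_linearCombination_le_of_mixedGramForm_isSymm {φ ψ : ι → E}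
    (hφ : Submodule.span ℂ (Set.range φ) = ⊤) (hB : (mixedGramForm φ ψ).IsSymm) :
    LinearMap.ker (Finsupp.linearCombination ℂ φ) ≤
      LinearMap.ker (Finsupp.linearCombination ℂ ψ) := by
  intro a ha
  rw [LinearMap.mem_ker] at ha ⊢
  refine ext_inner_left ℂ fun x => ?_
  obtain ⟨b, rfl⟩ : x ∈ LinearMap.range (Finsupp.linearCombination ℂ φ) := by
    rw [Finsupp.range_linearCombination, hφ]; trivial
  rw [inner_zero_right, ← mixedGramForm_apply, ← LinearMap.isSymm_def.1 hB, mixedGramForm_apply,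
    ha, inner_zero_left, map_zero]

theorem mixedGramForm_apply_self_nonneg {φ ψ : ℕ → E}
    (hpos : ∀ (N : ℕ) (c : ℕ → ℂ),
      0 ≤ ∑ k ∈ Finset.range N, ∑ j ∈ Finset.range N,
          (starRingEnd ℂ) (c k) * ⟪φ j, ψ k⟫ * c j) (a : ℕ →₀ ℂ) :
    0 ≤ mixedGramForm φ ψ a a := by
  obtain ⟨N, hN⟩ := a.support.exists_nat_subset_range
  have hN' : a ∈ Finsupp.supported ℂ ℂ (range N) := by exact hN
  rw [mixedGramForm_apply, Finsupp.linearCombination_apply_of_mem_supported ℂ hN',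
    Finsupp.linearCombination_apply_of_mem_supported ℂ hN', sum_inner]
  convert hpos N (fun n => (starRingEnd ℂ) (a n)) using 1
  rw [Finset.sum_comm]
  refine Finset.sum_congr rfl fun j _ => ?_
  rw [inner_sum]
  refine Finset.sum_congr rfl fun k _ => ?_
  simp only [inner_smul_left, inner_smul_right, starRingEnd_self_apply]
  ring

end InnerProductSpace

/-- in a finite-dimensional Hilbert space, if every principal
submatrix of the mixed Grammian `G_{m,n} = ⟨ψ_m, φ_n⟩` is positive semidefinite,
then there is a positive invertible operator `T` with `Tφ_n = ψ_n` for all `n`. -/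
theorem positive_map_of_grammian_posSemidef
    {H : Type*} [NormedAddCommGroup H] [InnerProductSpace ℂ H]
    [FiniteDimensional ℂ H] (φ ψ : ℕ → H)
    (hφspan : Submodule.span ℂ (Set.range φ) = ⊤)
    (hψspan : Submodule.span ℂ (Set.range ψ) = ⊤)
    (hpos : ∀ (N : ℕ) (c : ℕ → ℂ),
      0 ≤ ∑ k ∈ Finset.range N, ∑ j ∈ Finset.range N,
          (starRingEnd ℂ) (c k) * ⟪φ j, ψ k⟫ * c j) :
    ∃ T : H ≃L[ℂ] H, (T : H →L[ℂ] H).IsPositive ∧ ∀ n, T (φ n) = ψ n := by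
  set P := Finsupp.linearCombination ℂ φ
  have hB := mixedGramForm_apply_self_nonneg hpos
  have hP : Function.Surjective P := by
    rw [← LinearMap.range_eq_top, Finsupp.range_linearCombination, hφspan]
  have hker := ker_linearCombination_le_of_mixedGramForm_isSymm hφspan
    (LinearMap.isSymm_of_forall_nonneg hB)
  obtain ⟨T, hT⟩ := LinearMap.exists_comp_eq_of_ker_le hP hker
  have hTφ (n : ℕ) : T (φ n) = ψ n := by
    simpa [P] using LinearMap.congr_fun hT (Finsupp.single n 1)
  have hTsurj : Function.Surjective T := by
    rw [← LinearMap.range_eq_top, eq_top_iff, ← hψspan, Submodule.span_le]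
    rintro _ ⟨n, rfl⟩
    exact ⟨φ n, hTφ n⟩
  let S := LinearEquiv.ofBijective T ⟨LinearMap.injective_iff_surjective.2 hTsurj, hTsurj⟩
  refine ⟨S.toContinuousLinearEquiv, LinearMap.isPositive_of_forall_inner_nonneg fun x => ?_, hTφ⟩
  obtain ⟨a, rfl⟩ := hP x
  change 0 ≤ ⟪P a, (T ∘ₗ P) a⟫
  rw [hT]
  exact hB a
end

section
/- If {e_n} is a sequence of unit vectors in H whose Kaczmarz auxiliary sequence {h_n} is Bessel with bound B ≤ 1, then ⟨h_0, h_n⟩ = 0 for all n ≥ 1. -/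
open scoped ComplexInnerProductSpace
open Filter Topology Finset

/- Testing the Bessel inequality against `x = h i` with `‖h i‖ = 1`: the `i`-th term
`‖⟪h i, h i⟫‖² = 1` already exhausts the bound `B ≤ 1`, so every other term vanishes. -/

variable {H : Type*} [NormedAddCommGroup H] [InnerProductSpace ℂ H] [CompleteSpace H]

theorem inner_eq_zero_of_bessel_of_norm_eq_one {𝕜 E : Type*} [RCLike 𝕜]
    [NormedAddCommGroup E] [InnerProductSpace 𝕜 E] {h : ℕ → E} {B : ℝ} (hB : B ≤ 1)
    (hbessel : ∀ (x : E) (N : ℕ), ∑ n ∈ range N, ‖inner 𝕜 (h n) x‖ ^ 2 ≤ B * ‖x‖ ^ 2)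
    {i n : ℕ} (hi : ‖h i‖ = 1) (hni : n ≠ i) : inner 𝕜 (h n) (h i) = 0 := by
  have hpair : ‖inner 𝕜 (h i) (h i)‖ ^ 2 + ‖inner 𝕜 (h n) (h i)‖ ^ 2
      ≤ ∑ k ∈ range (max i n + 1), ‖inner 𝕜 (h k) (h i)‖ ^ 2 := by
    rw [← sum_pair (f := fun k ↦ ‖inner 𝕜 (h k) (h i)‖ ^ 2) hni.symm]
    refine sum_le_sum_of_subset_of_nonneg ?_ fun _ _ _ ↦ by positivity
    simp only [insert_subset_iff, singleton_subset_iff, mem_range]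
    omega
  have hii : ‖inner 𝕜 (h i) (h i)‖ = 1 := by simp [hi]
  have hbound := hbessel (h i) (max i n + 1)
  rw [hii] at hpair
  rw [hi] at hbound
  rw [← norm_eq_zero, ← sq_eq_zero_iff]
  nlinarith [sq_nonneg ‖inner 𝕜 (h n) (h i)‖]

theorem aux_orthogonal_of_bessel_general
    (e h : ℕ → H) (B : ℝ)
    (hunit : ∀ n, ‖e n‖ = 1)
    (hh0 : h 0 = e 0)
    (hB : B ≤ 1)
    (hbessel : ∀ (x : H) (N : ℕ),
      ∑ n ∈ Finset.range N, ‖⟪h n, x⟫‖ ^ 2 ≤ B * ‖x‖ ^ 2) :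
    ∀ n, 1 ≤ n → ⟪h n, h 0⟫ = 0 := by
  intro n hn
  have hh0_norm : ‖h 0‖ = 1 := hh0 ▸ hunit 0
  exact inner_eq_zero_of_bessel_of_norm_eq_one hB hbessel hh0_norm (Nat.one_le_iff_ne_zero.mp hn)

/-- if `e` is a sequence of unit vectors whose Kaczmarz auxiliary
sequence `h` is Bessel with bound `B ≤ 1`, then `⟨h_0, h_n⟩ = 0` for all `n ≥ 1`. -/
theorem aux_orthogonal_of_bessel
    (e h : ℕ → H) (B : ℝ)
    (hunit : ∀ n, ‖e n‖ = 1)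
    (hh0 : h 0 = e 0)
    (hh : ∀ n, h (n + 1)
        = e (n + 1) - ∑ k ∈ Finset.range (n + 1), ⟪e k, e (n + 1)⟫ • h k)
    (hB : B ≤ 1)
    (hbessel : ∀ (x : H) (N : ℕ),
      ∑ n ∈ Finset.range N, ‖⟪h n, x⟫‖ ^ 2 ≤ B * ‖x‖ ^ 2) :
    ∀ n, 1 ≤ n → ⟪h n, h 0⟫ = 0 :=
  aux_orthogonal_of_bessel_general e h B hunit hh0 hB hbessel
end

section
/- Let {e_n} be a sequence in H with Kaczmarz auxiliary sequence {h_n}, and let {ψ_n} be any sequence in H. Define x_n by the classical Kaczmarz algorithm for x, and y_0 = ⟨x, e_0⟩ψ_0, y_n = y_{n-1} + ⟨x − x_{n-1}, e_n⟩ψ_n. Then y_n = Σ_{k=0}^n ⟨x, h_k⟩ψ_k for all n; in particular ⟨x − x_{n-1}, e_n⟩ = ⟨x, h_n⟩. -/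
open scoped ComplexInnerProductSpace
open Filter Topology Finset

variable {H : Type*} [NormedAddCommGroup H] [InnerProductSpace ℂ H] [CompleteSpace H]

/-!
The recursion defining `h` is exactly what makes the innovation of the classical step,
`⟨x − ∑_{k≤n} ⟨x, h_k⟩ e_k, e_{n+1}⟩`, equal to `⟨x, h_{n+1}⟩`. Hence by induction the classical
iterates are the partial sums `x_n = ∑_{k≤n} ⟨x, h_k⟩ e_k`, every innovation is `⟨x, h_n⟩`, and
the augmented iterates, which add up the same innovations along `ψ`, are `∑_{k≤n} ⟨x, h_k⟩ ψ_k`.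
-/

theorem eq_sum_range_succ_of_add_succ {M : Type*} [AddCommMonoid M] {f g : ℕ → M}
    (h0 : f 0 = g 0) (hsucc : ∀ n, f (n + 1) = f n + g (n + 1)) (n : ℕ) :
    f n = ∑ k ∈ range (n + 1), g k := by
  induction n with
  | zero => simpa using h0
  | succ n ih => rw [hsucc, ih, sum_range_succ _ (n + 1)]

section Auxiliary

variable {𝕜 E ι : Type*} [RCLike 𝕜] [NormedAddCommGroup E] [InnerProductSpace 𝕜 E]

theorem inner_sum_inner_smul (s : Finset ι) (e h : ι → E) (v x : E) :
    inner 𝕜 v (∑ k ∈ s, inner 𝕜 (h k) x • e k) = inner 𝕜 (∑ k ∈ s, inner 𝕜 (e k) v • h k) x := by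
  rw [inner_sum, sum_inner]
  refine sum_congr rfl fun k _ => ?_
  rw [inner_smul_right, inner_smul_left, inner_conj_symm, mul_comm]

theorem inner_sub_sum_inner_auxiliary_smul (e h : ℕ → E) (x : E) (n : ℕ)
    (hh : h (n + 1) = e (n + 1) - ∑ k ∈ range (n + 1), inner 𝕜 (e k) (e (n + 1)) • h k) :
    inner 𝕜 (e (n + 1)) (x - ∑ k ∈ range (n + 1), inner 𝕜 (h k) x • e k) = inner 𝕜 (h (n + 1)) x := by
  rw [inner_sub_right, inner_sum_inner_smul, hh, inner_sub_left]

theorem kaczmarz_eq_sum_inner_auxiliary_smul (e h X : ℕ → E) (x : E)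
    (hh0 : h 0 = e 0)
    (hh : ∀ n, h (n + 1) = e (n + 1) - ∑ k ∈ range (n + 1), inner 𝕜 (e k) (e (n + 1)) • h k)
    (hX0 : X 0 = inner 𝕜 (e 0) x • e 0)
    (hX : ∀ n, X (n + 1) = X n + inner 𝕜 (e (n + 1)) (x - X n) • e (n + 1)) (n : ℕ) :
    X n = ∑ k ∈ range (n + 1), inner 𝕜 (h k) x • e k := by
  induction n with
  | zero => simp [hX0, hh0]
  | succ n ih =>
    rw [hX, ih, inner_sub_sum_inner_auxiliary_smul e h x n (hh n), sum_range_succ _ (n + 1)]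

end Auxiliary

/-- augmented dual Kaczmarz algorithm: with `x_n` the classical
Kaczmarz approximations of `x` from `e`, `h` the auxiliary sequence of `e`, and
`y_0 = ⟨x, e_0⟩ψ_0`, `y_n = y_{n-1} + ⟨x − x_{n-1}, e_n⟩ψ_n`, we have
`y_n = ∑_{k=0}^n ⟨x, h_k⟩ψ_k`; in particular `⟨x − x_{n-1}, e_n⟩ = ⟨x, h_n⟩`. -/
theorem augmented_dual_kaczmarz
    (e ψ h X Y : ℕ → H) (x : H)
    (hh0 : h 0 = e 0)
    (hh : ∀ n, h (n + 1)
        = e (n + 1) - ∑ k ∈ Finset.range (n + 1), ⟪e k, e (n + 1)⟫ • h k)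
    (hX0 : X 0 = ⟪e 0, x⟫ • e 0)
    (hX : ∀ n, X (n + 1) = X n + ⟪e (n + 1), x - X n⟫ • e (n + 1))
    (hY0 : Y 0 = ⟪e 0, x⟫ • ψ 0)
    (hY : ∀ n, Y (n + 1) = Y n + ⟪e (n + 1), x - X n⟫ • ψ (n + 1)) :
    (∀ n, Y n = ∑ k ∈ Finset.range (n + 1), ⟪h k, x⟫ • ψ k) ∧
      ∀ n, ⟪e (n + 1), x - X n⟫ = ⟪h (n + 1), x⟫ := by
  have innovation : ∀ n, ⟪e (n + 1), x - X n⟫ = ⟪h (n + 1), x⟫ := fun n => by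
    rw [kaczmarz_eq_sum_inner_auxiliary_smul e h X x hh0 hh hX0 hX n]
    exact inner_sub_sum_inner_auxiliary_smul e h x n (hh n)
  refine ⟨eq_sum_range_succ_of_add_succ (by rw [hY0, hh0]) fun n => ?_, innovation⟩
  rw [hY, innovation]
end
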